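/- Let f : ℝⁿ → ℝ be continuously differentiable, x₀ ∈ ℝⁿ, and suppose the sublevel set Ω = { x ∈ ℝⁿ : f(x) ≤ f(x₀) } is compact. Let η > 0, integer M ≥ 0, and constants 0 < c ≤ A. Suppose the sequences (x_k) ⊂ ℝⁿ and (α_k) ⊂ [c, A] satisfy x_{k+1} = x_k − α_k ∇f(x_k) and the nonmonotone sufficient-decrease condition f(x_{k+1}) ≤ max_{0 ≤ j ≤ min(k, M)} f(x_{k−j}) − η α_k ‖∇f(x_k)‖² for every k ≥ 0. Then x_k ∈ Ω for all k, ∇f(x_k) → 0 as k → ∞, and every cluster point x̄ of (x_k) is a stationary point of f, i.e. ∇f(x̄) = 0. -/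

import Mathlib

/-!
The reference value `W k = max_{j ≤ min k M} f (x (k - j))` is nonincreasing and bounded below
on the compact sublevel set, so it converges to some `L`. Let `l k` be an index where the
maximum `W k` is attained, so `f (x (l k)) → L`. The sufficient-decrease inequality at the
index `l k - 1` forces the decrease term there, hence the step `x (l k) - x (l k - 1)`, to
vanish; by uniform continuity of `f` on the sublevel set, `f (x (l k - 1)) → L` as well, and
inductively `f (x (l k - j)) → L` for each `j ≤ M`. Every index `k` is of the form
`l (k + M) - j` with `j ≤ M`, so `f (x k) → L`, and then the decrease terms, which are
bounded by `W k - f (x (k + 1))`, tend to `0`; since the steps are bounded below, so do the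
gradients.
-/

open Filter Topology Uniformity Set

def slidingMax (M : ℕ) (u : ℕ → ℝ) (k : ℕ) : ℝ :=
  (Finset.range (min k M + 1)).sup' Finset.nonempty_range_add_one (fun j => u (k - j))

def NonmonotoneDecrease (M : ℕ) (u d : ℕ → ℝ) : Prop :=
  ∀ k, u (k + 1) ≤ slidingMax M u k - d k

section slidingMax

variable {M : ℕ} {u : ℕ → ℝ}

theorem le_slidingMax (k : ℕ) : u k ≤ slidingMax M u k :=
  Finset.le_sup' (fun j => u (k - j)) (Finset.mem_range.2 (Nat.succ_pos _))

@[simp]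
theorem slidingMax_zero : slidingMax M u 0 = u 0 := by
  simp [slidingMax]

theorem exists_slidingMax_eq (k : ℕ) : ∃ i, k - M ≤ i ∧ i ≤ k ∧ slidingMax M u k = u i := by
  obtain ⟨j, hj, hmax⟩ :=
    Finset.exists_mem_eq_sup' Finset.nonempty_range_add_one (fun j => u (k - j))
  exact ⟨k - j, by have := Finset.mem_range.1 hj; omega, k.sub_le j, hmax⟩

theorem slidingMax_succ_le {k : ℕ} (h : u (k + 1) ≤ slidingMax M u k) :
    slidingMax M u (k + 1) ≤ slidingMax M u k := by
  refine Finset.sup'_le _ _ fun j hj => ?_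
  rcases j with _ | j
  · exact h
  · have hj : j < min k M + 1 := by have := Finset.mem_range.1 hj; omega
    show u (k + 1 - (j + 1)) ≤ _
    rw [Nat.add_sub_add_right]
    exact Finset.le_sup' (fun j => u (k - j)) (Finset.mem_range.2 hj)

end slidingMax

namespace NonmonotoneDecrease

variable {M : ℕ} {u d : ℕ → ℝ} {L : ℝ}

theorem antitone_slidingMax (h : NonmonotoneDecrease M u d) (hd : ∀ k, 0 ≤ d k) :
    Antitone (slidingMax M u) :=
  antitone_nat_of_succ_le fun k => slidingMax_succ_le <| (h k).trans (sub_le_self _ (hd k))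

theorem tendsto_comp_decrease (h : NonmonotoneDecrease M u d) (hd : ∀ k, 0 ≤ d k)
    (hW : Tendsto (slidingMax M u) atTop (𝓝 L)) {m : ℕ → ℕ} (hm : Tendsto m atTop atTop)
    (hu : Tendsto (fun k => u (m k + 1)) atTop (𝓝 L)) :
    Tendsto (fun k => d (m k)) atTop (𝓝 0) := by
  have hgap : Tendsto (fun k => slidingMax M u (m k) - u (m k + 1)) atTop (𝓝 0) := by
    simpa using (hW.comp hm).sub hu
  exact squeeze_zero (fun k => hd _) (fun k => by linarith [h (m k)]) hgap

theorem tendsto_comp_of_tendsto_comp_succ (h : NonmonotoneDecrease M u d)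
    (hinc : Tendsto (fun k => u (k + 1) - u k) (comap d (𝓝 0)) (𝓝 0))
    (hd : ∀ k, 0 ≤ d k) (hW : Tendsto (slidingMax M u) atTop (𝓝 L)) {m : ℕ → ℕ}
    (hm : Tendsto m atTop atTop) (hu : Tendsto (fun k => u (m k + 1)) atTop (𝓝 L)) :
    Tendsto (fun k => u (m k)) atTop (𝓝 L) := by
  have hstep := hinc.comp (tendsto_comap_iff.2 (h.tendsto_comp_decrease hd hW hm hu))
  simpa using hu.sub hstep

theorem tendsto_comp_sub_of_slidingMax_eq (h : NonmonotoneDecrease M u d)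
    (hinc : Tendsto (fun k => u (k + 1) - u k) (comap d (𝓝 0)) (𝓝 0))
    (hd : ∀ k, 0 ≤ d k) (hW : Tendsto (slidingMax M u) atTop (𝓝 L)) {l : ℕ → ℕ}
    (hl : Tendsto l atTop atTop) (hWl : ∀ k, slidingMax M u k = u (l k)) (j : ℕ) :
    Tendsto (fun k => u (l k - j)) atTop (𝓝 L) := by
  induction j with
  | zero => simpa using hW.congr hWl
  | succ j ih =>
    refine h.tendsto_comp_of_tendsto_comp_succ hinc hd hW
      ((tendsto_sub_atTop_nat _).comp hl) (ih.congr' ?_)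
    filter_upwards [hl.eventually_ge_atTop (j + 1)] with k hk
    congr 1
    omega

theorem tendsto (h : NonmonotoneDecrease M u d)
    (hinc : Tendsto (fun k => u (k + 1) - u k) (comap d (𝓝 0)) (𝓝 0)) (hd : ∀ k, 0 ≤ d k)
    (hW : Tendsto (slidingMax M u) atTop (𝓝 L)) : Tendsto u atTop (𝓝 L) := by
  choose l hl_ge hl_le hWl using exists_slidingMax_eq (M := M) (u := u)
  have hl : Tendsto l atTop atTop := tendsto_atTop_mono hl_ge (tendsto_sub_atTop_nat M)
  refine fun V hV => mem_map.2 ?_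
  -- `u k` is one of the `M + 1` values `u (l (k + M) - j)` with `j ≤ M`.
  have hnear : ∀ᶠ k in atTop, ∀ j ∈ Finset.range (M + 1), u (l (k + M) - j) ∈ V :=
    (eventually_all_finset _).2 fun j _ =>
      (h.tendsto_comp_sub_of_slidingMax_eq hinc hd hW hl hWl j).comp
        (tendsto_add_atTop_nat M) hV
  filter_upwards [hnear] with k hk
  have hj : l (k + M) - k ∈ Finset.range (M + 1) := by
    have := hl_ge (k + M); have := hl_le (k + M); simp only [Finset.mem_range]; omega
  have hk' := hk _ hj
  rwa [show l (k + M) - (l (k + M) - k) = k by have := hl_ge (k + M); omega] at hk'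

theorem tendsto_decrease_zero (h : NonmonotoneDecrease M u d)
    (hinc : Tendsto (fun k => u (k + 1) - u k) (comap d (𝓝 0)) (𝓝 0)) (hd : ∀ k, 0 ≤ d k)
    (hbdd : BddBelow (range u)) : Tendsto d atTop (𝓝 0) := by
  obtain ⟨b, hb⟩ := hbdd
  have hWbdd : BddBelow (range (slidingMax M u)) :=
    ⟨b, forall_mem_range.2 fun k => (hb (mem_range_self k)).trans (le_slidingMax k)⟩
  have hW := tendsto_atTop_ciInf (h.antitone_slidingMax hd) hWbdd
  exact h.tendsto_comp_decrease hd hW tendsto_id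
    ((h.tendsto hinc hd hW).comp (tendsto_add_atTop_nat 1))

end NonmonotoneDecrease

theorem UniformContinuousOn.tendsto_sub_of_tendsto_dist {α ι : Type*} [PseudoMetricSpace α]
    {f : α → ℝ} {s : Set α} (hf : UniformContinuousOn f s) {l : Filter ι} {p q : ι → α}
    (hp : ∀ i, p i ∈ s) (hq : ∀ i, q i ∈ s) (hpq : Tendsto (fun i => dist (p i) (q i)) l (𝓝 0)) :
    Tendsto (fun i => f (p i) - f (q i)) l (𝓝 0) := by
  have hpair : Tendsto (fun i => (p i, q i)) l (𝓤 α ⊓ 𝓟 (s ×ˢ s)) :=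
    tendsto_inf.2 ⟨tendsto_uniformity_iff_dist_tendsto_zero.2 hpq,
      tendsto_principal.2 (Eventually.of_forall fun i => ⟨hp i, hq i⟩)⟩
  rw [tendsto_iff_dist_tendsto_zero]
  simpa [← Real.dist_eq] using tendsto_uniformity_iff_dist_tendsto_zero.1 (Tendsto.comp hf hpair)

theorem tendsto_zero_of_tendsto_mul_norm_sq {ι E : Type*} [SeminormedAddCommGroup E]
    {l : Filter ι} {a : ι → ℝ} {g : ι → E} {c : ℝ} (hc : 0 < c) (ha : ∀ i, c ≤ a i)
    (h : Tendsto (fun i => a i * ‖g i‖ ^ 2) l (𝓝 0)) : Tendsto g l (𝓝 0) := by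
  have hsq : Tendsto (fun i => ‖g i‖ ^ 2) l (𝓝 0) := by
    refine squeeze_zero (fun i => sq_nonneg _) (fun i => ?_) (by simpa using h.div_const c)
    rw [le_div_iff₀ hc, mul_comm]
    exact mul_le_mul_of_nonneg_right (ha i) (sq_nonneg _)
  rw [tendsto_zero_iff_norm_tendsto_zero]
  simpa using hsq.sqrt

theorem ContDiff.continuous_gradient {E : Type*} [NormedAddCommGroup E] [InnerProductSpace ℝ E]
    [CompleteSpace E] {f : E → ℝ} (hf : ContDiff ℝ 1 f) : Continuous (gradient f) :=
  (InnerProductSpace.toDual ℝ E).symm.continuous.comp (hf.continuous_fderiv one_ne_zero)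

theorem MapClusterPt.eq_of_tendsto {α X : Type*} [TopologicalSpace X] [T2Space X]
    {F : Filter α} {v : α → X} {y z : X} (h : MapClusterPt y F v) (hv : Tendsto v F (𝓝 z)) :
    y = z :=
  eq_of_nhds_neBot (h.clusterPt.neBot.mono (inf_le_inf_left _ hv))

theorem stmt_11_general {n : ℕ} (f : EuclideanSpace ℝ (Fin n) → ℝ) (hf : ContDiff ℝ 1 f)
    (x₀ : EuclideanSpace ℝ (Fin n))
    (hΩ : IsCompact {y : EuclideanSpace ℝ (Fin n) | f y ≤ f x₀})
    (η : ℝ) (hη : 0 < η) (M : ℕ)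
    (c A : ℝ) (hc : 0 < c)
    (x : ℕ → EuclideanSpace ℝ (Fin n)) (α : ℕ → ℝ)
    (hx0 : x 0 = x₀)
    (hα : ∀ k, α k ∈ Set.Icc c A)
    (hstep : ∀ k, x (k + 1) = x k - α k • gradient f (x k))
    (hdec : ∀ k, f (x (k + 1)) ≤
      (Finset.range (min k M + 1)).sup' Finset.nonempty_range_add_one (fun j => f (x (k - j)))
        - η * α k * ‖gradient f (x k)‖ ^ 2) :
    (∀ k, x k ∈ {y : EuclideanSpace ℝ (Fin n) | f y ≤ f x₀}) ∧
      Tendsto (fun k => gradient f (x k)) atTop (nhds 0) ∧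
      ∀ xbar : EuclideanSpace ℝ (Fin n), MapClusterPt xbar atTop x → gradient f xbar = 0 := by
  set d : ℕ → ℝ := fun k => η * α k * ‖gradient f (x k)‖ ^ 2
  have hND : NonmonotoneDecrease M (fun k => f (x k)) d := hdec
  have hα₀ : ∀ k, 0 < α k := fun k => hc.trans_le (hα k).1
  have hd : ∀ k, 0 ≤ d k := fun k => by have := hα₀ k; positivity
  have hsub : ∀ k, x k ∈ {y | f y ≤ f x₀} := fun k => by
    simpa [hx0] using (le_slidingMax k).trans (hND.antitone_slidingMax hd k.zero_le)
  have hgrad {l : Filter ℕ} (hl : Tendsto d l (𝓝 0)) :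
      Tendsto (fun k => gradient f (x k)) l (𝓝 0) :=
    tendsto_zero_of_tendsto_mul_norm_sq (mul_pos hη hc)
      (fun k => mul_le_mul_of_nonneg_left (hα k).1 hη.le) hl
  have hinc : Tendsto (fun k => f (x (k + 1)) - f (x k)) (comap d (𝓝 0)) (𝓝 0) := by
    have hdist : Tendsto (fun k => dist (x (k + 1)) (x k)) (comap d (𝓝 0)) (𝓝 0) := by
      refine squeeze_zero (fun k => dist_nonneg) (fun k => ?_)
        (by simpa using (hgrad tendsto_comap).norm.const_mul A)
      rw [hstep, dist_eq_norm, sub_sub_cancel_left, norm_neg, norm_smul,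
        Real.norm_of_nonneg (hα₀ k).le]
      exact mul_le_mul_of_nonneg_right (hα k).2 (norm_nonneg _)
    exact (hΩ.uniformContinuousOn_of_continuous hf.continuous.continuousOn)
      |>.tendsto_sub_of_tendsto_dist (fun k => hsub (k + 1)) hsub hdist
  have hbdd : BddBelow (range fun k => f (x k)) :=
    (hΩ.bddBelow_image hf.continuous.continuousOn).mono
      (range_subset_iff.2 fun k => mem_image_of_mem f (hsub k))
  have hgrad_lim := hgrad (hND.tendsto_decrease_zero hinc hd hbdd)
  exact ⟨hsub, hgrad_lim, fun xbar hxbar =>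
    (hxbar.continuousAt_comp hf.continuous_gradient.continuousAt).eq_of_tendsto hgrad_lim⟩

/-- Global convergence of gradient iterations with bounded step-sizes
satisfying the nonmonotone (Grippo–Lampariello–Lucidi type) sufficient-decrease
condition: the iterates stay in the compact sublevel set `Ω`, the gradients tend to zero,
and every cluster point is a stationary point. -/
theorem stmt_11 {n : ℕ} (f : EuclideanSpace ℝ (Fin n) → ℝ) (hf : ContDiff ℝ 1 f)
    (x₀ : EuclideanSpace ℝ (Fin n))
    (hΩ : IsCompact {y : EuclideanSpace ℝ (Fin n) | f y ≤ f x₀})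
    (η : ℝ) (hη : 0 < η) (M : ℕ)
    (c A : ℝ) (hc : 0 < c) (hcA : c ≤ A)
    (x : ℕ → EuclideanSpace ℝ (Fin n)) (α : ℕ → ℝ)
    (hx0 : x 0 = x₀)
    (hα : ∀ k, α k ∈ Set.Icc c A)
    (hstep : ∀ k, x (k + 1) = x k - α k • gradient f (x k))
    (hdec : ∀ k, f (x (k + 1)) ≤
      (Finset.range (min k M + 1)).sup' Finset.nonempty_range_add_one (fun j => f (x (k - j)))
        - η * α k * ‖gradient f (x k)‖ ^ 2) :
    (∀ k, x k ∈ {y : EuclideanSpace ℝ (Fin n) | f y ≤ f x₀}) ∧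
      Tendsto (fun k => gradient f (x k)) atTop (nhds 0) ∧
      ∀ xbar : EuclideanSpace ℝ (Fin n), MapClusterPt xbar atTop x → gradient f xbar = 0 :=
  stmt_11_general f hf x₀ hΩ η hη M c A hc x α hx0 hα hstep hdec
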